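/- arXiv:1104.1608 — 4 statements merged into one kernel-verified Lean document; each statement's English description precedes it below -/
import Mathlib

section
/- The class of edge regular colourings is stable under the meet operation of the lattice of coloured graphs: if G and H are coloured graphs on the same vertex set V, both with edge regular colourings, then their meet G ∧ H also has an edge regular colouring. -/
/-- `P` is a partition of the set `A` (into nonempty subsets of `A`). -/
def IsPartitionOn {α : Type*} (A : Set α) (P : Set (Set α)) : Prop :=
  ∅ ∉ P ∧ (∀ s ∈ P, s ⊆ A) ∧ ∀ a ∈ A, ∃! s, s ∈ P ∧ a ∈ s

/-- A vertex and edge coloured graph: a graph together with a vertex colouring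
(partition of the vertices) and an edge colouring (partition of the edges). -/
structure ColouredGraph (V : Type*) where
  graph : SimpleGraph V
  VP : Set (Set V)
  EP : Set (Set (Sym2 V))

/-- The data of a coloured graph is valid: `VP` partitions `V` and `EP` partitions the edge set. -/
def ColouredGraph.Valid {V : Type*} (G : ColouredGraph V) : Prop :=
  Setoid.IsPartition G.VP ∧ IsPartitionOn G.graph.edgeSet G.EP

/-- Every class of `P` is a union of classes of `Q` (`P` is coarser than `Q`). -/
def Coarser {α : Type*} (P Q : Set (Set α)) : Prop :=
  ∀ c ∈ P, ∃ T ⊆ Q, c = ⋃₀ T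

/-- The partial ordering on coloured graphs: `G ⪯ H` iff the edge set of `G` is contained in
that of `H`, the vertex partition of `G` is coarser than that of `H`, and every edge colour
class of `G` is a union of edge colour classes of `H`. -/
def CGle {V : Type*} (G H : ColouredGraph V) : Prop :=
  G.graph ≤ H.graph ∧ Coarser G.VP H.VP ∧ Coarser G.EP H.EP

/-- The edge `e` connects the vertex classes `u` and `v`. -/
def Connects {V : Type*} (e : Sym2 V) (u v : Set V) : Prop :=
  ∃ a b, e = s(a, b) ∧ a ∈ u ∧ b ∈ v

/-- A colouring is edge regular if any two equally coloured edges connect the same pair of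
vertex colour classes. -/
def ColouredGraph.EdgeRegular {V : Type*} (G : ColouredGraph V) : Prop :=
  ∀ c ∈ G.EP, ∀ e ∈ c, ∀ f ∈ c,
    ∃ u ∈ G.VP, ∃ v ∈ G.VP, Connects e u v ∧ Connects f u v

/-- Edge regular colourings are stable under the meet of coloured graphs: if `G` and `H`
are edge regular coloured graphs on `V` and `K` is their meet (greatest lower bound with
respect to the coloured-graph partial ordering), then `K` is edge regular. -/
theorem stmt6 {V : Type*} (G H K : ColouredGraph V)
    (hGv : G.Valid) (hHv : H.Valid) (hKv : K.Valid)
    (hG : G.EdgeRegular) (hH : H.EdgeRegular)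
    (hKG : CGle K G) (hKH : CGle K H)
    (hglb : ∀ K' : ColouredGraph V, K'.Valid → CGle K' G → CGle K' H → CGle K' K) :
    K.EdgeRegular := by
  classical
  obtain ⟨hKVP, hKPne, hKPsub, hKPun⟩ := hKv
  choose κ hκ1 hκ2 using hKVP.2
  set p : Sym2 V → Sym2 (Set V) := Sym2.map κ with hp
  have hrep : ∀ z : Sym2 V, ∃ a b, z = s(a, b) := fun z =>
    Sym2.ind (fun a b => ⟨a, b, rfl⟩) z
  -- κ is constant on vertex classes of any X with K.VP coarser than X.VP
  have kconst : ∀ (X : ColouredGraph V), Setoid.IsPartition X.VP → Coarser K.VP X.VP →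
      ∀ u ∈ X.VP, ∀ a ∈ u, ∀ b ∈ u, κ a = κ b := by
    intro X hXP hco u hu a ha b hb
    obtain ⟨T, hT, hTe⟩ := hco (κ a) (hκ1 a).1
    have haU : a ∈ ⋃₀ T := hTe ▸ (hκ1 a).2
    obtain ⟨t, htT, hat⟩ := haU
    have htu : t = u := ExistsUnique.unique (hXP.2 a) ⟨hT htT, hat⟩ ⟨hu, ha⟩
    have hbκ : b ∈ κ a := by rw [hTe]; exact ⟨t, htT, htu ▸ hb⟩
    exact hκ2 b (κ a) ⟨(hκ1 a).1, hbκ⟩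
  -- p is constant on edge classes of any edge regular X
  have pconst : ∀ (X : ColouredGraph V), X.EdgeRegular → Setoid.IsPartition X.VP →
      Coarser K.VP X.VP → ∀ t ∈ X.EP, ∀ e ∈ t, ∀ f ∈ t, p e = p f := by
    intro X hXr hXP hco t ht e he f hf
    obtain ⟨u, hu, v, hv, ⟨a, b, he', hau, hbv⟩, ⟨a', b', hf', hau', hbv'⟩⟩ :=
      hXr t ht e he f hf
    subst he'; subst hf'
    simp only [hp, Sym2.map_pair_eq]
    rw [kconst X hXP hco u hu a hau a' hau', kconst X hXP hco v hv b hbv b' hbv']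
  -- the refined edge partition
  let EP' : Set (Set (Sym2 V)) := {S | ∃ c ∈ K.EP, ∃ e ∈ c, S = {f | f ∈ c ∧ p f = p e}}
  let K' : ColouredGraph V := ⟨K.graph, K.VP, EP'⟩
  have hK'v : K'.Valid := by
    refine ⟨hKVP, ?_, ?_, ?_⟩
    · rintro ⟨c, hc, e, he, hS⟩
      have : e ∈ (∅ : Set (Sym2 V)) := by rw [hS]; exact ⟨he, rfl⟩
      exact absurd this (Set.notMem_empty e)
    · rintro S ⟨c, hc, e, he, rfl⟩ f ⟨hfc, _⟩
      exact hKPsub c hc hfc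
    · intro x hx
      obtain ⟨c, ⟨hc, hxc⟩, hcu⟩ := hKPun x hx
      refine ⟨{f | f ∈ c ∧ p f = p x}, ⟨⟨c, hc, x, hxc, rfl⟩, hxc, rfl⟩, ?_⟩
      rintro S ⟨⟨c', hc', e', he', rfl⟩, hxc', hpx⟩
      have hcc : c' = c := hcu c' ⟨hc', hxc'⟩
      subst hcc
      ext g
      exact ⟨fun ⟨h1, h2⟩ => ⟨h1, h2.trans hpx.symm⟩, fun ⟨h1, h2⟩ => ⟨h1, h2.trans hpx⟩⟩
  have coar : ∀ (X : ColouredGraph V), X.EdgeRegular → Setoid.IsPartition X.VP →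
      Coarser K.VP X.VP → Coarser K.EP X.EP → Coarser EP' X.EP := by
    rintro X hXr hXP hcoV hcoE S ⟨c, hc, e, he, rfl⟩
    obtain ⟨T, hT, hTc⟩ := hcoE c hc
    refine ⟨{t ∈ T | t ⊆ {f | f ∈ c ∧ p f = p e}}, fun t ht => hT ht.1, ?_⟩
    ext g
    constructor
    · rintro ⟨hgc, hpg⟩
      have hgU : g ∈ ⋃₀ T := hTc ▸ hgc
      obtain ⟨t, htT, hgt⟩ := hgU
      refine ⟨t, ⟨htT, fun g' hg' => ⟨?_, ?_⟩⟩, hgt⟩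
      · rw [hTc]; exact ⟨t, htT, hg'⟩
      · exact (pconst X hXr hXP hcoV t (hT htT) g' hg' g hgt).trans hpg
    · rintro ⟨t, ⟨htT, hts⟩, hgt⟩
      exact hts hgt
  have hK'G : CGle K' G := ⟨hKG.1, hKG.2.1, coar G hG hGv.1 hKG.2.1 hKG.2.2⟩
  have hK'H : CGle K' H := ⟨hKH.1, hKH.2.1, coar H hH hHv.1 hKH.2.1 hKH.2.2⟩
  obtain ⟨-, -, hcoK⟩ := hglb K' hK'v hK'G hK'H
  -- main argument
  intro c hc e he f hf
  have hS : {g | g ∈ c ∧ p g = p e} ∈ EP' := ⟨c, hc, e, he, rfl⟩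
  obtain ⟨T, hT, hTe⟩ := hcoK _ hS
  have heS : e ∈ ⋃₀ T := hTe ▸ (⟨he, rfl⟩ : e ∈ {g | g ∈ c ∧ p g = p e})
  obtain ⟨t, htT, het⟩ := heS
  have hee : e ∈ K.graph.edgeSet := hKPsub c hc he
  have htc : t = c := ExistsUnique.unique (hKPun e hee) ⟨hT htT, het⟩ ⟨hc, he⟩
  have hfS : f ∈ {g | g ∈ c ∧ p g = p e} := by
    rw [hTe]; exact ⟨t, htT, htc.symm ▸ hf⟩
  have hpf : p f = p e := hfS.2
  obtain ⟨a, b, rfl⟩ := hrep e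
  obtain ⟨a', b', rfl⟩ := hrep f
  have hpf' : s(κ a', κ b') = s(κ a, κ b) := by
    simpa only [hp, Sym2.map_pair_eq] using hpf
  rw [Sym2.eq_iff] at hpf'
  refine ⟨κ a, (hκ1 a).1, κ b, (hκ1 b).1, ⟨a, b, rfl, (hκ1 a).2, (hκ1 b).2⟩, ?_⟩
  rcases hpf' with ⟨h1, h2⟩ | ⟨h1, h2⟩
  · exact ⟨a', b', rfl, h1 ▸ (hκ1 a').2, h2 ▸ (hκ1 b').2⟩
  · exact ⟨b', a', Sym2.eq_swap.symm, h2 ▸ (hκ1 b').2, h1 ▸ (hκ1 a').2⟩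
end

section
/- If the colourings of coloured graphs G and H on vertex set V are generated by permutation groups Γ_G and Γ_H respectively (i.e., vertex and edge colour classes are the orbits of the group), then the colouring of the meet G ∧ H in the lattice of coloured graphs is generated by the group ⟨Γ_G ∪ Γ_H⟩ generated by both groups. In particular, the class of permutation-generated colourings is stable under the meet operation. -/
/-- The colouring of `G` is generated by the permutation group `Γ`: `Γ` consists of
automorphisms of the graph, and the vertex and edge colour classes are the orbits of `Γ`
on the vertices and on the edges respectively. -/
def ColouredGraph.GeneratedBy {V : Type*} (G : ColouredGraph V)
    (Γ : Subgroup (Equiv.Perm V)) : Prop :=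
  (∀ σ ∈ Γ, ∀ a b : V, G.graph.Adj a b ↔ G.graph.Adj (σ a) (σ b)) ∧
  G.VP = {c | ∃ a : V, c = {b | ∃ σ ∈ Γ, σ a = b}} ∧
  G.EP = {c | ∃ e ∈ G.graph.edgeSet, c = {f | ∃ σ ∈ Γ, Sym2.map (⇑σ) e = f}}

/-!
Every colour class of the meet `K` is a union of colour classes of `G` and also of `H`, that is, of
`Γ_G`-orbits and of `Γ_H`-orbits; so it is invariant under `Γ = Γ_G ⊔ Γ_H`, hence a union of
`Γ`-orbits. Conversely, colouring the graph of `K` by its `Γ`-orbits gives a valid coloured graph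
below both `G` and `H`, hence below the meet `K`. Two partitions each coarser than the other
coincide.
-/

open MulAction Pointwise

section Orbits

variable {M α : Type*} [Group M] [MulAction M α]

def orbitsOn (Γ : Subgroup M) (A : Set α) : Set (Set α) :=
  {c | ∃ a ∈ A, c = orbit Γ a}

lemma orbit_subgroup_eq_setOf (Γ : Subgroup M) (a : α) :
    orbit Γ a = {b | ∃ σ ∈ Γ, σ • a = b} := by
  ext b
  simp [mem_orbit_iff, Subgroup.smul_def]

lemma le_stabilizer_orbit (Γ : Subgroup M) (a : α) : Γ ≤ stabilizer M (orbit Γ a) := by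
  refine fun σ hσ => mem_stabilizer_set.2 fun b => ?_
  rw [← orbit_eq_iff, ← orbit_eq_iff, show σ • b = (⟨σ, hσ⟩ : Γ) • b from rfl, orbit_smul]

lemma le_stabilizer_sUnion {Γ : Subgroup M} {T : Set (Set α)}
    (hT : ∀ t ∈ T, Γ ≤ stabilizer M t) : Γ ≤ stabilizer M (⋃₀ T) := by
  refine fun σ hσ => mem_stabilizer_set.2 fun b => ?_
  simp only [Set.mem_sUnion]
  exact exists_congr fun t => and_congr_right fun ht => mem_stabilizer_set.1 (hT t ht hσ) b

lemma le_stabilizer_of_coarser {Γ : Subgroup M} {A : Set α} {P : Set (Set α)}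
    (hP : Coarser P (orbitsOn Γ A)) {c : Set α} (hc : c ∈ P) : Γ ≤ stabilizer M c := by
  obtain ⟨T, hT, rfl⟩ := hP c hc
  refine le_stabilizer_sUnion fun t ht => ?_
  obtain ⟨a, -, rfl⟩ := hT ht
  exact le_stabilizer_orbit Γ a

lemma sup_le_stabilizer_of_coarser {Γ₁ Γ₂ : Subgroup M} {A₁ A₂ : Set α} {P : Set (Set α)}
    (h₁ : Coarser P (orbitsOn Γ₁ A₁)) (h₂ : Coarser P (orbitsOn Γ₂ A₂))
    {c : Set α} (hc : c ∈ P) : Γ₁ ⊔ Γ₂ ≤ stabilizer M c :=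
  sup_le (le_stabilizer_of_coarser h₁ hc) (le_stabilizer_of_coarser h₂ hc)

lemma sUnion_image_orbit_of_le_stabilizer {Γ : Subgroup M} {c : Set α}
    (hc : Γ ≤ stabilizer M c) : ⋃₀ (orbit Γ '' c) = c := by
  refine subset_antisymm ?_ fun a ha =>
    Set.mem_sUnion_of_mem (mem_orbit_self a) (Set.mem_image_of_mem _ ha)
  rintro b ⟨_, ⟨a, ha, rfl⟩, ⟨σ, rfl⟩⟩
  exact (mem_stabilizer_set.1 (hc σ.2) a).2 ha

lemma coarser_orbitsOn {Γ : Subgroup M} {A : Set α} {P : Set (Set α)}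
    (hPA : ∀ c ∈ P, c ⊆ A) (hP : ∀ c ∈ P, Γ ≤ stabilizer M c) : Coarser P (orbitsOn Γ A) := by
  intro c hc
  refine ⟨orbit Γ '' c, ?_, (sUnion_image_orbit_of_le_stabilizer (hP c hc)).symm⟩
  rintro _ ⟨a, ha, rfl⟩
  exact ⟨a, hPA c hc ha, rfl⟩

lemma orbitsOn_coarser_orbitsOn {Γ Δ : Subgroup M} {A B : Set α} (hΔ : Δ ≤ Γ) (hAB : A ⊆ B)
    (hA : Γ ≤ stabilizer M A) : Coarser (orbitsOn Γ A) (orbitsOn Δ B) := by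
  refine coarser_orbitsOn ?_ ?_
  · rintro _ ⟨a, ha, rfl⟩ _ ⟨σ, rfl⟩
    exact hAB ((mem_stabilizer_set.1 (hA σ.2) a).2 ha)
  · rintro _ ⟨a, -, rfl⟩
    exact hΔ.trans (le_stabilizer_orbit Γ a)

lemma isPartitionOn_orbitsOn {Γ : Subgroup M} {A : Set α} (hA : Γ ≤ stabilizer M A) :
    IsPartitionOn A (orbitsOn Γ A) := by
  refine ⟨?_, ?_, fun a ha => ⟨orbit Γ a, ⟨⟨a, ha, rfl⟩, mem_orbit_self a⟩, ?_⟩⟩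
  · rintro ⟨a, -, h⟩
    exact (h ▸ mem_orbit_self a : a ∈ (∅ : Set α))
  · rintro _ ⟨a, ha, rfl⟩ _ ⟨σ, rfl⟩
    exact (mem_stabilizer_set.1 (hA σ.2) a).2 ha
  · rintro _ ⟨⟨b, -, rfl⟩, hab⟩
    exact (orbit_eq_iff.2 hab).symm

end Orbits

section Partitions

variable {α : Type*} {A : Set α} {P Q : Set (Set α)}

lemma isPartitionOn_univ_iff : IsPartitionOn Set.univ P ↔ Setoid.IsPartition P :=
  ⟨fun ⟨h0, _, h⟩ => ⟨h0, fun a => h a trivial⟩,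
    fun ⟨h0, h⟩ => ⟨h0, fun s _ => Set.subset_univ s, fun a _ => h a⟩⟩

lemma IsPartitionOn.sUnion_eq (hP : IsPartitionOn A P) : ⋃₀ P = A :=
  subset_antisymm (Set.sUnion_subset hP.2.1) fun a ha =>
    let ⟨_, ⟨hc, hac⟩, _⟩ := hP.2.2 a ha
    Set.mem_sUnion_of_mem hac hc

lemma IsPartitionOn.eq_of_mem (hP : IsPartitionOn A P) {c d : Set α} (hc : c ∈ P) (hd : d ∈ P)
    {a : α} (hac : a ∈ c) (had : a ∈ d) : c = d :=
  (hP.2.2 a (hP.2.1 c hc hac)).unique ⟨hc, hac⟩ ⟨hd, had⟩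

lemma Coarser.exists_subset (h : Coarser P Q) {c : Set α} (hc : c ∈ P) {a : α} (ha : a ∈ c) :
    ∃ q ∈ Q, a ∈ q ∧ q ⊆ c := by
  obtain ⟨T, hTQ, rfl⟩ := h c hc
  obtain ⟨q, hq, haq⟩ := Set.mem_sUnion.1 ha
  exact ⟨q, hTQ hq, haq, Set.subset_sUnion_of_mem hq⟩

lemma IsPartitionOn.subset_of_coarser (hP : IsPartitionOn A P) (hPQ : Coarser P Q)
    (hQP : Coarser Q P) : P ⊆ Q := by
  intro c hc
  obtain ⟨a, ha⟩ := Set.nonempty_iff_ne_empty.2 fun h => hP.1 (h ▸ hc)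
  obtain ⟨q, hq, haq, hqc⟩ := hPQ.exists_subset hc ha
  obtain ⟨p, hp, hap, hpq⟩ := hQP.exists_subset hq haq
  have hpc : p = c := hP.eq_of_mem hp hc hap ha
  rwa [subset_antisymm hqc (hpc ▸ hpq)] at hq

lemma IsPartitionOn.eq_of_coarser (hP : IsPartitionOn A P) (hQ : IsPartitionOn A Q)
    (hPQ : Coarser P Q) (hQP : Coarser Q P) : P = Q :=
  subset_antisymm (hP.subset_of_coarser hPQ hQP) (hQ.subset_of_coarser hQP hPQ)

end Partitions

lemma IsPartitionOn.eq_orbitsOn {M α : Type*} [Group M] [MulAction M α] {Γ : Subgroup M}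
    {A : Set α} {P : Set (Set α)} (hP : IsPartitionOn A P) (hA : Γ ≤ stabilizer M A)
    (hPΓ : ∀ c ∈ P, Γ ≤ stabilizer M c) (hΓP : Coarser (orbitsOn Γ A) P) : P = orbitsOn Γ A :=
  hP.eq_of_coarser (isPartitionOn_orbitsOn hA) (coarser_orbitsOn hP.2.1 hPΓ) hΓP

instance Equiv.Perm.instMulActionSym2 {V : Type*} : MulAction (Equiv.Perm V) (Sym2 V) where
  smul σ := Sym2.map σ
  one_smul := congrFun Sym2.map_id'
  mul_smul σ τ e := (Sym2.map_map (g := σ) (f := τ) e).symm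

namespace ColouredGraph

variable {V : Type*}

lemma mem_stabilizer_edgeSet_iff (X : SimpleGraph V) (σ : Equiv.Perm V) :
    σ ∈ stabilizer (Equiv.Perm V) X.edgeSet ↔ ∀ a b, X.Adj a b ↔ X.Adj (σ a) (σ b) := by
  rw [mem_stabilizer_set, Sym2.forall]
  exact forall₂_congr fun _ _ => Iff.comm

lemma generatedBy_iff (G : ColouredGraph V) (Γ : Subgroup (Equiv.Perm V)) :
    G.GeneratedBy Γ ↔ Γ ≤ stabilizer (Equiv.Perm V) G.graph.edgeSet ∧
      G.VP = orbitsOn Γ Set.univ ∧ G.EP = orbitsOn Γ G.graph.edgeSet := by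
  simp only [GeneratedBy, orbitsOn, orbit_subgroup_eq_setOf, Set.mem_univ, true_and,
    SetLike.le_def, mem_stabilizer_edgeSet_iff]
  rfl

def orbitColouring (X : SimpleGraph V) (Γ : Subgroup (Equiv.Perm V)) : ColouredGraph V :=
  ⟨X, orbitsOn Γ Set.univ, orbitsOn Γ X.edgeSet⟩

variable {X : SimpleGraph V} {Γ : Subgroup (Equiv.Perm V)}

lemma orbitColouring_valid (hX : Γ ≤ stabilizer (Equiv.Perm V) X.edgeSet) :
    (orbitColouring X Γ).Valid :=
  ⟨isPartitionOn_univ_iff.1 (isPartitionOn_orbitsOn (by simp)), isPartitionOn_orbitsOn hX⟩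

lemma orbitColouring_cgle {G : ColouredGraph V} {Δ : Subgroup (Equiv.Perm V)}
    (hXG : X ≤ G.graph) (hG : G.GeneratedBy Δ) (hΔ : Δ ≤ Γ)
    (hX : Γ ≤ stabilizer (Equiv.Perm V) X.edgeSet) : CGle (orbitColouring X Γ) G := by
  obtain ⟨-, hGV, hGE⟩ := (generatedBy_iff G Δ).1 hG
  refine ⟨hXG, hGV ▸ orbitsOn_coarser_orbitsOn hΔ subset_rfl (by simp), ?_⟩
  exact hGE ▸ orbitsOn_coarser_orbitsOn hΔ (SimpleGraph.edgeSet_mono hXG) hX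

end ColouredGraph

open ColouredGraph

theorem stmt10_general {V : Type*} (G H K : ColouredGraph V)
    (ΓG ΓH : Subgroup (Equiv.Perm V))
    (hG : G.GeneratedBy ΓG) (hH : H.GeneratedBy ΓH)
    (hKv : K.Valid) (hKG : CGle K G) (hKH : CGle K H)
    (hglb : ∀ K' : ColouredGraph V, K'.Valid → CGle K' G → CGle K' H → CGle K' K) :
    K.GeneratedBy (ΓG ⊔ ΓH) := by
  obtain ⟨-, hGV, hGE⟩ := (generatedBy_iff G ΓG).1 hG
  obtain ⟨-, hHV, hHE⟩ := (generatedBy_iff H ΓH).1 hH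
  have hKV_inv : ∀ c ∈ K.VP, ΓG ⊔ ΓH ≤ stabilizer _ c := fun c =>
    sup_le_stabilizer_of_coarser (hGV ▸ hKG.2.1) (hHV ▸ hKH.2.1)
  have hKE_inv : ∀ c ∈ K.EP, ΓG ⊔ ΓH ≤ stabilizer _ c := fun c =>
    sup_le_stabilizer_of_coarser (hGE ▸ hKG.2.2) (hHE ▸ hKH.2.2)
  have hK : ΓG ⊔ ΓH ≤ stabilizer _ K.graph.edgeSet :=
    hKv.2.sUnion_eq ▸ le_stabilizer_sUnion hKE_inv
  have hK'K : CGle (orbitColouring K.graph (ΓG ⊔ ΓH)) K :=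
    hglb _ (orbitColouring_valid hK) (orbitColouring_cgle hKG.1 hG le_sup_left hK)
      (orbitColouring_cgle hKH.1 hH le_sup_right hK)
  refine (generatedBy_iff K _).2 ⟨hK, ?_, ?_⟩
  · exact (isPartitionOn_univ_iff.2 hKv.1).eq_orbitsOn (by simp) hKV_inv hK'K.2.1
  · exact hKv.2.eq_orbitsOn hK hKE_inv hK'K.2.2

/-- If the colourings of `G` and `H` are generated by permutation groups `Γ_G` and `Γ_H`
and `K` is the meet of `G` and `H` in the lattice of coloured graphs, then the colouring
of `K` is generated by the group generated by `Γ_G` and `Γ_H`; in particular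
permutation-generated colourings are stable under the meet. -/
theorem stmt10 {V : Type*} (G H K : ColouredGraph V)
    (ΓG ΓH : Subgroup (Equiv.Perm V))
    (hGv : G.Valid) (hHv : H.Valid)
    (hG : G.GeneratedBy ΓG) (hH : H.GeneratedBy ΓH)
    (hKv : K.Valid) (hKG : CGle K G) (hKH : CGle K H)
    (hglb : ∀ K' : ColouredGraph V, K'.Valid → CGle K' G → CGle K' H → CGle K' K) :
    K.GeneratedBy (ΓG ⊔ ΓH) :=
  stmt10_general G H K ΓG ΓH hG hH hKv hKG hKH hglb
end

section
/- If P₁ and P₂ are two partitions of the vertex set of a graph G, both equitable with respect to G, then their join P₁ ∨ P₂ in the partition lattice is also equitable with respect to G. -/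
/-!
The vertices having the same number of neighbours in every block of a fixed partition `J` form an
equivalence relation. If `P` is an equitable partition finer than `J`, every block of `J` is a
disjoint union of blocks of `P`, so `P`-related vertices have the same number of neighbours in it:
this relation contains every equitable refinement of `J`. For `J = P₁ ⊔ P₂` it therefore contains
`P₁` and `P₂`, hence their join, which is exactly the claim that the join is equitable.
-/

/-- The partition (equivalence relation) `P` is equitable with respect to the graph `G`:
any two related vertices have the same number of neighbours in every block. -/
def EquitableSetoid {V : Type*} (G : SimpleGraph V) (P : Setoid V) : Prop :=
  ∀ a b : V, P.r a b → ∀ c : V,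
    Set.ncard {x | G.Adj a x ∧ P.r c x} = Set.ncard {x | G.Adj b x ∧ P.r c x}

noncomputable def SimpleGraph.blockDegree {V : Type*} (G : SimpleGraph V) (J : Setoid V)
    (u c : V) : ℕ :=
  {x | G.Adj u x ∧ J c x}.ncard

theorem Set.ncard_eq_of_forall_ncard_inter_preimage_eq {α β : Type*} [Finite α] {s t : Set α}
    (f : α → β) (h : ∀ b, (s ∩ f ⁻¹' {b}).ncard = (t ∩ f ⁻¹' {b}).ncard) :
    s.ncard = t.ncard := by
  classical
  have : Fintype α := Fintype.ofFinite α
  have fibrewise : ∀ r : Set α, r.ncard = ∑ b ∈ Finset.univ.image f, (r ∩ f ⁻¹' {b}).ncard := by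
    intro r
    rw [Set.ncard_eq_toFinset_card', Finset.card_eq_sum_card_fiberwise fun x _ ↦
      Finset.mem_image_of_mem f (Finset.mem_univ x)]
    refine Finset.sum_congr rfl fun b _ ↦ ?_
    rw [Set.ncard_eq_toFinset_card']
    congr 1
    ext x
    simp
  rw [fibrewise s, fibrewise t]
  exact Finset.sum_congr rfl fun b _ ↦ h b

namespace EquitableSetoid

variable {V : Type*} {G : SimpleGraph V} {P J : Setoid V}

theorem iff_le_ker : EquitableSetoid G J ↔ J ≤ Setoid.ker (G.blockDegree J) := by
  simp only [EquitableSetoid, Setoid.le_def, Setoid.ker_def, funext_iff, SimpleGraph.blockDegree]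

theorem le_ker_blockDegree_of_le [Finite V] (hP : EquitableSetoid G P) (hPJ : P ≤ J) :
    P ≤ Setoid.ker (G.blockDegree J) := by
  refine Setoid.le_def.2 fun {a b} hab ↦ Setoid.ker_def.2 <| funext fun c ↦
    Set.ncard_eq_of_forall_ncard_inter_preimage_eq (Quotient.mk P) ?_
  refine Quotient.ind fun y ↦ ?_
  -- The `P`-block of `y` lies inside the `J`-block of `c` or is disjoint from it.
  have fibre : ∀ u, {x | G.Adj u x ∧ J c x} ∩ Quotient.mk P ⁻¹' {⟦y⟧} =
      {x | J c y ∧ G.Adj u x ∧ P y x} := by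
    intro u
    ext x
    simp only [Set.mem_inter_iff, Set.mem_ofPred_eq, Set.mem_preimage, Set.mem_singleton_iff,
      Quotient.eq]
    exact ⟨fun ⟨⟨hux, hcx⟩, hxy⟩ ↦ ⟨J.trans hcx (hPJ hxy), hux, P.symm hxy⟩,
      fun ⟨hcy, hux, hyx⟩ ↦ ⟨⟨hux, J.trans hcy (hPJ hyx)⟩, P.symm hyx⟩⟩
  rw [fibre, fibre]
  by_cases hcy : J c y
  · simpa only [hcy, true_and] using hP a b hab y
  · simp only [hcy, false_and, Set.ofPred_false]

end EquitableSetoid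

/-- If `P₁` and `P₂` are partitions of the vertex set of a graph `G`, both equitable with
respect to `G`, then their join `P₁ ⊔ P₂` in the partition lattice is equitable too. -/
theorem stmt13 {V : Type*} [Finite V] (G : SimpleGraph V) (P₁ P₂ : Setoid V)
    (h1 : EquitableSetoid G P₁) (h2 : EquitableSetoid G P₂) :
    EquitableSetoid G (P₁ ⊔ P₂) :=
  EquitableSetoid.iff_le_ker.2 <| sup_le (h1.le_ker_blockDegree_of_le le_sup_left)
    (h2.le_ker_blockDegree_of_le le_sup_right)
end

section
/- A graph colouring (𝒱, ℰ) is regular (i.e., both edge regular and vertex regular) if and only if the vertex-and-node partition 𝒱 ∪ 𝒩 of the corresponding factor graph is equitable with respect to the factor graph. -/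
/-- The partition `P` (given as a set of blocks) is equitable with respect to `H`:
any two elements of a common block have equally many neighbours in every block. -/
def EquitableOn {α : Type*} (H : SimpleGraph α) (P : Set (Set α)) : Prop :=
  ∀ v ∈ P, ∀ w ∈ P, ∀ a ∈ v, ∀ b ∈ v,
    Set.ncard {x | H.Adj a x ∧ x ∈ w} = Set.ncard {x | H.Adj b x ∧ x ∈ w}

/-- The factor graph of `G`: the bipartite graph on `V ⊕ E` with `α` adjacent to the node
of an edge `n` iff `n` is incident with `α`. -/
def factorGraph {V : Type*} (G : SimpleGraph V) : SimpleGraph (V ⊕ ↥G.edgeSet) :=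
  SimpleGraph.fromRel fun x y =>
    ∃ (a : V) (n : ↥G.edgeSet), x = Sum.inl a ∧ y = Sum.inr n ∧ a ∈ (n : Sym2 V)

/-- The vertex-and-node partition of the factor graph induced by the colouring of `G`. -/
def sumPartition {V : Type*} (G : ColouredGraph V) : Set (Set (V ⊕ ↥G.graph.edgeSet)) :=
  {s | (∃ c ∈ G.VP, s = Sum.inl '' c) ∨
       (∃ c ∈ G.EP, s = Sum.inr '' {n : ↥G.graph.edgeSet | (n : Sym2 V) ∈ c})}

/-- The colouring is vertex regular: for every edge colour class `u`, the vertex partition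
is equitable with respect to the subgraph induced by `u`. -/
def ColouredGraph.VertexRegular {V : Type*} (G : ColouredGraph V) : Prop :=
  ∀ u ∈ G.EP, ∀ v ∈ G.VP, ∀ a ∈ v, ∀ b ∈ v, ∀ w ∈ G.VP,
    Set.ncard {x ∈ w | s(a, x) ∈ u} = Set.ncard {x ∈ w | s(b, x) ∈ u}

/-!
In the factor graph vertices are adjacent only to edge nodes, so equitability of `𝒱 ∪ 𝒩` splits
into two conditions: equally coloured vertices have the same degree in every edge colour, and
equally coloured edges have equally many endpoints in every vertex class. The endpoint counts of
an edge are the multiplicities of the multiset of vertex classes it joins, so the second condition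
is exactly edge regularity. Under edge regularity all `c`-neighbours of a vertex class `v` lie in
a single class `w₀`; counting `c`-neighbours inside a class `w` then gives the full `c`-degree
when `w = w₀` and zero otherwise, so vertex regularity is the first condition.
-/

lemma Sym2.toMultiset_injective {α : Type*} : Function.Injective (toMultiset : Sym2 α → _) := by
  intro e f h
  induction e with | h a b => ?_
  induction f with | h c d => ?_
  change ((↑[a, b] : Multiset α) = ↑[c, d]) at h
  rw [Multiset.coe_eq_coe, List.perm_pair] at h
  rw [Sym2.eq_iff]
  simpa using h

-- The block of `a` when `P` is a partition, defined without choosing one.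
def blockOf {V : Type*} (P : Set (Set V)) (a : V) : Set V :=
  {x | ∀ s ∈ P, x ∈ s → a ∈ s}

section Partition

variable {V : Type*} {P : Set (Set V)} {c : Set (Sym2 V)}

lemma mem_blockOf_self (a : V) : a ∈ blockOf P a := fun _ _ h => h

lemma blockOf_mem (hP : Setoid.IsPartition P) (a : V) : blockOf P a ∈ P :=
  Setoid.eqv_class_mem hP.2

lemma blockOf_eq (hP : Setoid.IsPartition P) {s : Set V} (hs : s ∈ P) {a : V} (ha : a ∈ s) :
    blockOf P a = s :=
  (Setoid.eq_eqv_class_of_mem hP.2 hs ha).symm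

lemma mem_iff_blockOf_eq (hP : Setoid.IsPartition P) {s : Set V} (hs : s ∈ P) {a : V} :
    a ∈ s ↔ blockOf P a = s :=
  ⟨blockOf_eq hP hs, fun h => h ▸ mem_blockOf_self a⟩

lemma connects_iff_map_blockOf (hP : Setoid.IsPartition P) {u v : Set V} (hu : u ∈ P)
    (hv : v ∈ P) (e : Sym2 V) : Connects e u v ↔ e.map (blockOf P) = s(u, v) := by
  induction e with | h a b => ?_
  rw [Sym2.map_mk]
  constructor
  · rintro ⟨x, y, hxy, hx, hy⟩
    rcases Sym2.eq_iff.1 hxy with ⟨rfl, rfl⟩ | ⟨rfl, rfl⟩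
    · rw [blockOf_eq hP hu hx, blockOf_eq hP hv hy]
    · rw [blockOf_eq hP hu hx, blockOf_eq hP hv hy, Sym2.eq_swap]
  · intro h
    rcases Sym2.eq_iff.1 h with ⟨rfl, rfl⟩ | ⟨rfl, rfl⟩
    · exact ⟨a, b, rfl, mem_blockOf_self a, mem_blockOf_self b⟩
    · exact ⟨b, a, Sym2.eq_swap, mem_blockOf_self b, mem_blockOf_self a⟩

lemma notMem_map_blockOf {w : Set V} (hP : Setoid.IsPartition P) (hw : w ∉ P) (e : Sym2 V) :
    w ∉ e.map (blockOf P) := by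
  rw [Sym2.mem_map]
  rintro ⟨a, -, rfl⟩
  exact hw (blockOf_mem hP a)

open scoped Classical in
lemma ncard_setOf_mem_and_mem_eq_count (hP : Setoid.IsPartition P) {w : Set V} (hw : w ∈ P)
    {e : Sym2 V} (he : ¬e.IsDiag) :
    {x ∈ w | x ∈ e}.ncard = (e.map (blockOf P)).toMultiset.count w := by
  induction e with | h a b => ?_
  have hab : a ≠ b := he
  have hset : {x ∈ w | x ∈ s(a, b)} = ↑(({a, b} : Finset V).filter (· ∈ w)) := by
    ext; simp [and_comm]
  change _ = Multiset.count w {blockOf P a, blockOf P b}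
  rw [hset, Set.ncard_coe_finset, Finset.filter_insert, Finset.filter_singleton,
    Multiset.insert_eq_cons, Multiset.count_cons, Multiset.count_singleton]
  simp only [eq_comm (a := w), ← mem_iff_blockOf_eq hP hw]
  split_ifs <;> simp [hab]

lemma map_blockOf_eq_iff (hP : Setoid.IsPartition P) {e f : Sym2 V} (he : ¬e.IsDiag)
    (hf : ¬f.IsDiag) :
    e.map (blockOf P) = f.map (blockOf P) ↔
      ∀ w ∈ P, {x ∈ w | x ∈ e}.ncard = {x ∈ w | x ∈ f}.ncard := by
  classical
  rw [← Sym2.toMultiset_injective.eq_iff, Multiset.ext]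
  refine ⟨fun h w hw => ?_, fun h w => ?_⟩
  · rw [ncard_setOf_mem_and_mem_eq_count hP hw he, ncard_setOf_mem_and_mem_eq_count hP hw hf, h]
  by_cases hw : w ∈ P
  · rw [← ncard_setOf_mem_and_mem_eq_count hP hw he, ← ncard_setOf_mem_and_mem_eq_count hP hw hf,
      h w hw]
  · simp only [Multiset.count_eq_zero.2, Sym2.mem_toMultiset, notMem_map_blockOf hP hw,
      not_false_eq_true]

lemma blockOf_eq_blockOf_of_mk_mem
    (hc : ∀ e ∈ c, ∀ f ∈ c, e.map (blockOf P) = f.map (blockOf P)) {a b x y : V}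
    (hab : blockOf P a = blockOf P b) (hx : s(a, x) ∈ c) (hy : s(b, y) ∈ c) :
    blockOf P x = blockOf P y := by
  have h := hc _ hx _ hy
  rwa [Sym2.map_mk, Sym2.map_mk, hab, Sym2.congr_right] at h

lemma exists_block_forall_mk_mem (hP : Setoid.IsPartition P)
    (hc : ∀ e ∈ c, ∀ f ∈ c, e.map (blockOf P) = f.map (blockOf P)) {v : Set V} (hv : v ∈ P) :
    ∃ w ∈ P, ∀ a ∈ v, ∀ x, s(a, x) ∈ c → x ∈ w := by
  by_cases h : ∃ a₀ ∈ v, ∃ x₀, s(a₀, x₀) ∈ c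
  · obtain ⟨a₀, ha₀, x₀, hx₀⟩ := h
    refine ⟨blockOf P x₀, blockOf_mem hP x₀, fun a ha x hx => ?_⟩
    rw [mem_iff_blockOf_eq hP (blockOf_mem hP x₀)]
    exact blockOf_eq_blockOf_of_mk_mem hc (by rw [blockOf_eq hP hv ha, blockOf_eq hP hv ha₀]) hx hx₀
  · push Not at h
    exact ⟨v, hv, fun a ha x hx => absurd hx (h a ha x)⟩

open scoped Classical in
lemma exists_ncard_setOf_mem_and_mk_mem_eq_ite (hP : Setoid.IsPartition P)
    (hc : ∀ e ∈ c, ∀ f ∈ c, e.map (blockOf P) = f.map (blockOf P)) {v : Set V} (hv : v ∈ P) :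
    ∃ w₀ ∈ P, ∀ a ∈ v, ∀ w ∈ P,
      {x ∈ w | s(a, x) ∈ c}.ncard = if w = w₀ then {x | s(a, x) ∈ c}.ncard else 0 := by
  obtain ⟨w₀, hw₀, hnbrs⟩ := exists_block_forall_mk_mem hP hc hv
  refine ⟨w₀, hw₀, fun a ha w hw => ?_⟩
  split_ifs with hww₀
  · subst hww₀
    congr 1
    ext x
    exact ⟨And.right, fun hx => ⟨hnbrs a ha x hx, hx⟩⟩
  · convert Set.ncard_empty V
    refine Set.eq_empty_iff_forall_notMem.2 fun x ⟨hxw, hx⟩ => hww₀ ?_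
    exact Setoid.eq_of_mem_eqv_class hP.2 hw hxw hw₀ (hnbrs a ha x hx)

end Partition

section FactorGraph

variable {V : Type*} {G : SimpleGraph V}

@[simp]
lemma factorGraph_adj_inl_inr {a : V} {n : G.edgeSet} :
    (factorGraph G).Adj (Sum.inl a) (Sum.inr n) ↔ a ∈ (n : Sym2 V) := by
  simp [factorGraph]

@[simp]
lemma factorGraph_adj_inr_inl {a : V} {n : G.edgeSet} :
    (factorGraph G).Adj (Sum.inr n) (Sum.inl a) ↔ a ∈ (n : Sym2 V) := by
  simp [factorGraph]

@[simp]
lemma not_factorGraph_adj_inl_inl {a b : V} : ¬(factorGraph G).Adj (Sum.inl a) (Sum.inl b) := by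
  simp [factorGraph]

@[simp]
lemma not_factorGraph_adj_inr_inr {n m : G.edgeSet} :
    ¬(factorGraph G).Adj (Sum.inr n) (Sum.inr m) := by
  simp [factorGraph]

lemma factorGraph_nbrs_inl_inl (a : V) (w : Set V) :
    {x | (factorGraph G).Adj (Sum.inl a) x ∧ x ∈ Sum.inl '' w} = ∅ := by
  ext (x | x) <;> simp

lemma factorGraph_nbrs_inr_inr (n : G.edgeSet) (S : Set G.edgeSet) :
    {x | (factorGraph G).Adj (Sum.inr n) x ∧ x ∈ Sum.inr '' S} = ∅ := by
  ext (x | x) <;> simp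

lemma ncard_factorGraph_nbrs_inl_inr (a : V) {c : Set (Sym2 V)} (hc : c ⊆ G.edgeSet) :
    {x | (factorGraph G).Adj (Sum.inl a) x ∧
        x ∈ Sum.inr '' {n : G.edgeSet | (n : Sym2 V) ∈ c}}.ncard = {x | s(a, x) ∈ c}.ncard := by
  refine (Set.ncard_congr (fun x hx => (Sum.inr ⟨s(a, x), hc hx⟩ : V ⊕ G.edgeSet)) ?_ ?_ ?_).symm
  · exact fun x hx => ⟨by simp, ⟨_, hx, rfl⟩⟩
  · intro x y _ _ h
    exact Sym2.congr_right.1 (congrArg Subtype.val (Sum.inr_injective h))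
  · rintro _ ⟨hadj, n, hn, rfl⟩
    have ha : a ∈ (n : Sym2 V) := factorGraph_adj_inl_inr.1 hadj
    have hother : s(a, Sym2.Mem.other ha) = n := Sym2.other_spec ha
    exact ⟨Sym2.Mem.other ha, show s(a, _) ∈ c by rwa [hother], by simp only [hother]⟩

lemma ncard_factorGraph_nbrs_inr_inl (n : G.edgeSet) (w : Set V) :
    {x | (factorGraph G).Adj (Sum.inr n) x ∧ x ∈ Sum.inl '' w}.ncard =
      {x ∈ w | x ∈ (n : Sym2 V)}.ncard := by
  have hnbrs : {x | (factorGraph G).Adj (Sum.inr n) x ∧ x ∈ Sum.inl '' w} =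
      Sum.inl '' {x ∈ w | x ∈ (n : Sym2 V)} := by
    ext (x | x) <;> simp [and_comm]
  rw [hnbrs, Set.ncard_image_of_injective _ Sum.inl_injective]

end FactorGraph

namespace ColouredGraph

variable {V : Type*} (G : ColouredGraph V)

def ColourDegreeRegular : Prop :=
  ∀ c ∈ G.EP, ∀ v ∈ G.VP, ∀ a ∈ v, ∀ b ∈ v,
    {x | s(a, x) ∈ c}.ncard = {x | s(b, x) ∈ c}.ncard

def IncidenceRegular : Prop :=
  ∀ c ∈ G.EP, ∀ e ∈ c, ∀ f ∈ c, ∀ w ∈ G.VP,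
    {x ∈ w | x ∈ e}.ncard = {x ∈ w | x ∈ f}.ncard

variable {G}

lemma edgeRegular_iff_map_blockOf (hVP : Setoid.IsPartition G.VP) :
    G.EdgeRegular ↔
      ∀ c ∈ G.EP, ∀ e ∈ c, ∀ f ∈ c, e.map (blockOf G.VP) = f.map (blockOf G.VP) := by
  refine forall₂_congr fun c _ => forall₂_congr fun e _ => forall₂_congr fun f _ => ?_
  constructor
  · rintro ⟨u, hu, v, hv, he, hf⟩
    rw [connects_iff_map_blockOf hVP hu hv] at he hf
    exact he.trans hf.symm
  · intro h
    induction e with | h a b => ?_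
    refine ⟨blockOf G.VP a, blockOf_mem hVP a, blockOf G.VP b, blockOf_mem hVP b, ?_, ?_⟩
    · rw [connects_iff_map_blockOf hVP (blockOf_mem hVP a) (blockOf_mem hVP b)]; rfl
    · rw [connects_iff_map_blockOf hVP (blockOf_mem hVP a) (blockOf_mem hVP b), ← h]; rfl

lemma edgeRegular_iff_incidenceRegular (hVP : Setoid.IsPartition G.VP)
    (hEP : ∀ c ∈ G.EP, c ⊆ G.graph.edgeSet) : G.EdgeRegular ↔ G.IncidenceRegular := by
  rw [edgeRegular_iff_map_blockOf hVP]
  exact forall₂_congr fun c hc => forall₂_congr fun e he => forall₂_congr fun f hf =>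
    map_blockOf_eq_iff hVP (G.graph.not_isDiag_of_mem_edgeSet (hEP c hc he))
      (G.graph.not_isDiag_of_mem_edgeSet (hEP c hc hf))

lemma vertexRegular_iff_colourDegreeRegular (hVP : Setoid.IsPartition G.VP)
    (hER : G.EdgeRegular) : G.VertexRegular ↔ G.ColourDegreeRegular := by
  rw [edgeRegular_iff_map_blockOf hVP] at hER
  constructor
  · intro hVR c hc v hv a ha b hb
    obtain ⟨w₀, hw₀, hcount⟩ := exists_ncard_setOf_mem_and_mk_mem_eq_ite hVP (hER c hc) hv
    simpa [hcount a ha w₀ hw₀, hcount b hb w₀ hw₀] using hVR c hc v hv a ha b hb w₀ hw₀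
  · intro hDR c hc v hv a ha b hb w hw
    obtain ⟨w₀, -, hcount⟩ := exists_ncard_setOf_mem_and_mk_mem_eq_ite hVP (hER c hc) hv
    rw [hcount a ha w hw, hcount b hb w hw, hDR c hc v hv a ha b hb]

lemma equitableOn_sumPartition_iff (hEP : ∀ c ∈ G.EP, c ⊆ G.graph.edgeSet) :
    EquitableOn (factorGraph G.graph) (sumPartition G) ↔
      G.ColourDegreeRegular ∧ G.IncidenceRegular := by
  constructor
  · intro hEq
    refine ⟨fun c hc v hv a ha b hb => ?_, fun c hc e he f hf w hw => ?_⟩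
    · have h := hEq _ (Or.inl ⟨v, hv, rfl⟩) _ (Or.inr ⟨c, hc, rfl⟩)
        (Sum.inl a) ⟨a, ha, rfl⟩ (Sum.inl b) ⟨b, hb, rfl⟩
      rwa [ncard_factorGraph_nbrs_inl_inr a (hEP c hc),
        ncard_factorGraph_nbrs_inl_inr b (hEP c hc)] at h
    · have h := hEq _ (Or.inr ⟨c, hc, rfl⟩) _ (Or.inl ⟨w, hw, rfl⟩)
        (Sum.inr ⟨e, hEP c hc he⟩) ⟨_, he, rfl⟩ (Sum.inr ⟨f, hEP c hc hf⟩) ⟨_, hf, rfl⟩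
      rwa [ncard_factorGraph_nbrs_inr_inl, ncard_factorGraph_nbrs_inr_inl] at h
  · rintro ⟨hDR, hIR⟩ B₁ hB₁ B₂ hB₂ x hx y hy
    rcases hB₁ with ⟨v, hv, rfl⟩ | ⟨c, hc, rfl⟩ <;> rcases hB₂ with ⟨w, hw, rfl⟩ | ⟨d, hd, rfl⟩
    · obtain ⟨a, -, rfl⟩ := hx
      obtain ⟨b, -, rfl⟩ := hy
      rw [factorGraph_nbrs_inl_inl, factorGraph_nbrs_inl_inl]
    · obtain ⟨a, ha, rfl⟩ := hx
      obtain ⟨b, hb, rfl⟩ := hy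
      rw [ncard_factorGraph_nbrs_inl_inr a (hEP d hd), ncard_factorGraph_nbrs_inl_inr b (hEP d hd)]
      exact hDR d hd v hv a ha b hb
    · obtain ⟨n, hn, rfl⟩ := hx
      obtain ⟨m, hm, rfl⟩ := hy
      rw [ncard_factorGraph_nbrs_inr_inl, ncard_factorGraph_nbrs_inr_inl]
      exact hIR c hc _ hn _ hm w hw
    · obtain ⟨n, -, rfl⟩ := hx
      obtain ⟨m, -, rfl⟩ := hy
      rw [factorGraph_nbrs_inr_inr, factorGraph_nbrs_inr_inr]

end ColouredGraph

theorem stmt15_general {V : Type*} (G : ColouredGraph V) (hG : G.Valid) :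
    (G.EdgeRegular ∧ G.VertexRegular) ↔
      EquitableOn (factorGraph G.graph) (sumPartition G) := by
  obtain ⟨hVP, -, hEP, -⟩ := hG
  rw [G.equitableOn_sumPartition_iff hEP, ← G.edgeRegular_iff_incidenceRegular hVP hEP, and_comm]
  exact and_congr_left (ColouredGraph.vertexRegular_iff_colourDegreeRegular hVP)

/-- A graph colouring is regular (both edge regular and vertex regular) if and only if the
vertex-and-node partition of the corresponding factor graph is equitable with respect to
the factor graph. -/
theorem stmt15 {V : Type*} [Finite V] (G : ColouredGraph V) (hG : G.Valid) :
    (G.EdgeRegular ∧ G.VertexRegular) ↔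
      EquitableOn (factorGraph G.graph) (sumPartition G) :=
  stmt15_general G hG
end
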